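/- arXiv:1908.00857 — 3 statements merged into one kernel-verified Lean document; each statement's English description precedes it below -/
import Mathlib

section
/- Let p, q, r be integers with p ≠ 0, gcd(p, q) = 1, |p| ≥ q ≥ 1, r ≥ 2 and r even, and set n = qr, m = |p|·r. If there exists x ∈ ℤ^n with T_n^m(x) = x such that C(x) has at least two elements, then there exists x ∈ ℤ^n with T_n^m(x) = x such that C(x) = {0, 1, 2, 3}. -/
/-- The twist map `T_n : ℤ^n → ℤ^n`,
`T_n(x_1,…,x_n) = (2x_1 − x_2, 2x_1 − x_3, …, 2x_1 − x_n, x_1)` (0-indexed). -/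
def twist (n : ℕ) (x : Fin n → ℤ) : Fin n → ℤ :=
  fun i => if h : (i : ℕ) + 1 < n then 2 * x ⟨0, i.pos⟩ - x ⟨(i : ℕ) + 1, h⟩ else x ⟨0, i.pos⟩

/-- The set of colors `C(x) = { (T_n^k(x))_i : 0 ≤ k < m, 1 ≤ i ≤ n }`. -/
def colors (n m : ℕ) (x : Fin n → ℤ) : Set ℤ :=
  {c | ∃ k, k < m ∧ ∃ i : Fin n, (twist n)^[k] x i = c}

/-!
Read indices in the ring `Fin n`, so that `x j` for `j : ℕ` is `x_{j mod n}`. Then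
`T(x)_i = 2 x_0 - x_{i+1}` for every `i`, and induction gives
`T^k(x)_i = 2 ∑_{j<k} (-1)^j x_j + (-1)^k x_{i+k}`.

For `r = 2` we have `gcd(m, n) = 2`. A fixed point of `T^m` satisfies `x_i = c + x_{i+m}` with
`c` independent of `i`; going `n` times around `ℤ/n` forces `c = 0`, so `x` has period `m`,
hence period `gcd(m, n) = 2`, and then `0 = c = m (x_0 - x_1)` makes `x` constant: every coloring
is trivial.

For even `r ≥ 4`, take `x_j = 1` if `j ≡ 0` or `j ≡ -1 (mod r)` and `x_j = 0` otherwise.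
Then `(-1)^j x_j = [r ∣ j] - [r ∣ j + 1]` telescopes, so `∑_{j<k} (-1)^j x_j = 1 - [r ∣ k]`:
this makes `x` a fixed point of `T^m` whose colors are exactly `0, 1, 2, 3`.
-/

open Finset Function Fin.CommRing

section FinIndex

variable {n : ℕ} [NeZero n]

theorem twist_apply (x : Fin n → ℤ) (i : Fin n) : twist n x i = 2 * x 0 - x (i + 1) := by
  have h0 : (⟨0, i.pos⟩ : Fin n) = 0 := Fin.ext (by simp)
  unfold twist
  split_ifs with h
  · rw [h0, show (⟨i + 1, h⟩ : Fin n) = i + 1 from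
      Fin.ext (by simp [Fin.val_add, Nat.mod_eq_of_lt h])]
  · have hi : (i : ℕ) + 1 = n := by omega
    rw [h0, show i + 1 = 0 from Fin.ext (by simp [Fin.val_add, hi])]
    ring

theorem iterate_twist_apply (x : Fin n → ℤ) (k : ℕ) (i : Fin n) :
    (twist n)^[k] x i = 2 * ∑ j ∈ range k, (-1) ^ j * x j + (-1) ^ k * x (i + k) := by
  induction k generalizing i with
  | zero => simp
  | succ k ih =>
    rw [iterate_succ_apply', twist_apply, ih, ih, sum_range_succ, zero_add]
    push_cast
    rw [add_assoc i 1, add_comm 1 (k : Fin n)]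
    ring

theorem twist_eq_self_of_forall_eq {x : Fin n → ℤ} (hx : ∀ i, x i = x 0) : twist n x = x := by
  funext i
  rw [twist_apply, hx (i + 1), hx i]
  ring

theorem eq_zero_of_forall_eq_add {f : Fin n → ℤ} {a : Fin n} {c : ℤ}
    (h : ∀ i, f i = c + f (i + a)) : c = 0 := by
  have hmul : ∀ t : ℕ, f 0 = t * c + f (t * a) := by
    intro t
    induction t with
    | zero => simp
    | succ t ih => rw [ih, h (t * a), Nat.cast_succ, Nat.cast_succ, add_one_mul (t : Fin n)]; ring
  have hn : (n : ℤ) * c = 0 := by simpa using hmul n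
  exact (mul_eq_zero.mp hn).resolve_left (by exact_mod_cast NeZero.ne n)

theorem Function.Periodic.natCast_gcd {α : Type*} {f : Fin n → α} {m : ℕ}
    (hf : Periodic f (m : Fin n)) : Periodic f (Nat.gcd m n : Fin n) := by
  have hbezout : ((Nat.gcd m n : ℤ) : Fin n) =
      ((m * Nat.gcdA m n + n * Nat.gcdB m n : ℤ) : Fin n) := congrArg _ (Nat.gcd_eq_gcd_ab m n)
  push_cast at hbezout
  rw [hbezout, Fin.natCast_self, zero_mul, add_zero, mul_comm]
  exact hf.int_mul _

theorem sum_range_two_mul_of_periodic_two {x : Fin n → ℤ} (hx : Periodic x 2) (P : ℕ) :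
    ∑ j ∈ range (2 * P), (-1) ^ j * x j = P * (x 0 - x 1) := by
  induction P with
  | zero => simp
  | succ P ih =>
    have heven : x (2 * P : ℕ) = x 0 := by simpa [mul_comm] using hx.nat_mul_eq P
    have hodd : x (2 * P + 1 : ℕ) = x 1 := by
      rw [← hx.nat_mul P 1]; push_cast; congr 1; ring
    rw [mul_add_one, sum_range_succ, sum_range_succ, ih, heven, hodd, pow_succ,
      (even_two_mul P).neg_one_pow]
    push_cast
    ring

theorem apply_eq_apply_zero_of_periodic_two {x : Fin n → ℤ} (hx : Periodic x 2)
    (h10 : x 1 = x 0) (i : Fin n) : x i = x 0 := by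
  rw [← Fin.cast_val_eq_self i]
  obtain ⟨t, ht | ht⟩ := Nat.even_or_odd' i
  · simpa [ht, mul_comm] using hx.nat_mul_eq t
  · simpa [ht, add_comm, mul_comm, h10] using hx.nat_mul t 1

theorem sum_eq_zero_and_periodic_of_iterate_twist {x : Fin n → ℤ} {m : ℕ} (hm : Even m)
    (hx : (twist n)^[m] x = x) :
    ∑ j ∈ range m, (-1) ^ j * x j = 0 ∧ Periodic x (m : Fin n) := by
  have hstep : ∀ i, x i = 2 * ∑ j ∈ range m, (-1) ^ j * x j + x (i + m) := fun i => by
    conv_lhs => rw [← hx]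
    rw [iterate_twist_apply, hm.neg_one_pow, one_mul]
  have hS := eq_zero_of_forall_eq_add hstep
  exact ⟨by linarith, fun i => by linarith [hstep i]⟩

theorem apply_eq_apply_zero_of_iterate_twist {x : Fin n → ℤ} {m : ℕ} (hm : m ≠ 0)
    (hmn : Nat.gcd m n = 2) (hx : (twist n)^[m] x = x) (i : Fin n) : x i = x 0 := by
  obtain ⟨P, rfl⟩ : 2 ∣ m := hmn ▸ Nat.gcd_dvd_left m n
  obtain ⟨hS, hper⟩ := sum_eq_zero_and_periodic_of_iterate_twist (even_two_mul P) hx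
  have h2 : Periodic x 2 := by simpa [hmn] using hper.natCast_gcd
  rw [sum_range_two_mul_of_periodic_two h2] at hS
  have hP : (P : ℤ) ≠ 0 := by exact_mod_cast right_ne_zero_of_mul hm
  exact apply_eq_apply_zero_of_periodic_two h2 (by linarith [(mul_eq_zero.mp hS).resolve_left hP]) i

theorem colors_subset_singleton_of_forall_eq {m : ℕ} {x : Fin n → ℤ}
    (hx : ∀ i, x i = x 0) : colors n m x ⊆ {x 0} := by
  rintro _ ⟨k, -, i, rfl⟩
  rw [iterate_fixed (twist_eq_self_of_forall_eq hx), hx i]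
  rfl

end FinIndex

def blockEnds (R j : ℕ) : ℤ := if R ∣ j ∨ R ∣ j + 1 then 1 else 0

section BlockEnds

variable {R : ℕ}

theorem blockEnds_eq_zero_or_eq_one (j : ℕ) : blockEnds R j = 0 ∨ blockEnds R j = 1 := by
  unfold blockEnds; split_ifs <;> simp

theorem blockEnds_add_of_dvd {a : ℕ} (ha : R ∣ a) (j : ℕ) :
    blockEnds R (j + a) = blockEnds R j := by
  simp only [blockEnds, add_right_comm j a 1, Nat.dvd_add_left ha]

theorem blockEnds_mod_of_dvd {n : ℕ} (hRn : R ∣ n) (j : ℕ) :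
    blockEnds R (j % n) = blockEnds R j := by
  conv_rhs => rw [← Nat.mod_add_div j n]
  exact (blockEnds_add_of_dvd (hRn.mul_right _) _).symm

theorem neg_one_pow_mul_blockEnds (hR : Even R) (j : ℕ) :
    (-1) ^ j * blockEnds R j = (if R ∣ j then 1 else 0) - if R ∣ j + 1 then 1 else 0 := by
  have h2 : 2 ∣ R := hR.two_dvd
  by_cases hj : R ∣ j
  · have hj1 : ¬ R ∣ j + 1 := fun h => by
      have := Nat.dvd_one.mp ((Nat.dvd_add_right hj).mp h)
      omega
    have := h2.trans hj
    rw [if_pos hj, if_neg hj1, (Nat.even_iff.mpr (by omega : j % 2 = 0)).neg_one_pow, blockEnds,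
      if_pos (Or.inl hj)]
    ring
  · by_cases hj1 : R ∣ j + 1
    · have := h2.trans hj1
      rw [if_neg hj, if_pos hj1, (Nat.odd_iff.mpr (by omega : j % 2 = 1)).neg_one_pow, blockEnds,
        if_pos (Or.inr hj1)]
      ring
    · rw [if_neg hj, if_neg hj1, blockEnds, if_neg (by tauto)]
      ring

theorem sum_range_neg_one_pow_mul_blockEnds (hR : Even R) (k : ℕ) :
    ∑ j ∈ range k, (-1) ^ j * blockEnds R j = 1 - if R ∣ k then 1 else 0 := by
  simp only [neg_one_pow_mul_blockEnds hR]
  rw [sum_range_sub']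
  simp

variable {n : ℕ} [NeZero n]

theorem iterate_twist_blockEnds (hR : Even R) (hRn : R ∣ n) (k j : ℕ) :
    (twist n)^[k] (fun i : Fin n => blockEnds R i) j
      = 2 * (1 - if R ∣ k then 1 else 0) + (-1) ^ k * blockEnds R (j + k) := by
  simp only [iterate_twist_apply, ← Nat.cast_add, Fin.val_natCast, blockEnds_mod_of_dvd hRn,
    sum_range_neg_one_pow_mul_blockEnds hR]

theorem iterate_twist_blockEnds_of_dvd (hR : Even R) (hRn : R ∣ n) {m : ℕ} (hRm : R ∣ m) :
    (twist n)^[m] (fun i : Fin n => blockEnds R i) = fun i : Fin n => blockEnds R i := by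
  funext i
  rw [← Fin.cast_val_eq_self i, iterate_twist_blockEnds hR hRn, if_pos hRm,
    (even_iff_two_dvd.mpr (hR.two_dvd.trans hRm)).neg_one_pow, blockEnds_add_of_dvd hRm,
    Fin.val_natCast, blockEnds_mod_of_dvd hRn]
  ring

theorem colors_blockEnds (hR : Even R) (hR3 : 3 ≤ R) (hRn : R ∣ n) {m : ℕ} (hm : 3 ≤ m) :
    colors n m (fun i : Fin n => blockEnds R i) = {0, 1, 2, 3} := by
  apply subset_antisymm
  · rintro _ ⟨k, -, i, rfl⟩
    rw [← Fin.cast_val_eq_self i, iterate_twist_blockEnds hR hRn]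
    by_cases hk : R ∣ k
    · rw [if_pos hk, (even_iff_two_dvd.mpr (hR.two_dvd.trans hk)).neg_one_pow]
      rcases blockEnds_eq_zero_or_eq_one (R := R) (i + k) with h | h <;> simp [h]
    · rw [if_neg hk]
      rcases neg_one_pow_eq_or ℤ k with hs | hs <;>
        rcases blockEnds_eq_zero_or_eq_one (R := R) (i + k) with h | h <;> simp [h, hs]
  · have hval : ∀ k < m, ∀ j : ℕ,
        2 * (1 - if R ∣ k then 1 else 0) + (-1) ^ k * blockEnds R (j + k) ∈
          colors n m (fun i : Fin n => blockEnds R i) := fun k hk j =>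
      ⟨k, hk, j, iterate_twist_blockEnds hR hRn k j⟩
    have hR1 : ¬ R ∣ 1 := fun h => by have := Nat.le_of_dvd one_pos h; omega
    have hR2 : ¬ R ∣ 2 := fun h => by have := Nat.le_of_dvd two_pos h; omega
    have h0 : blockEnds R 0 = 1 := if_pos (Or.inl (dvd_zero R))
    have h1 : blockEnds R 1 = 0 := if_neg (by simp [hR1, hR2])
    have hRR : blockEnds R R = 1 := if_pos (Or.inl dvd_rfl)
    rintro c (rfl | rfl | rfl | rfl)
    · simpa [h1] using hval 0 (by omega) 1
    · simpa [h0] using hval 0 (by omega) 0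
    · simpa [hR1, h1] using hval 1 (by omega) 0
    · simpa [hR2, Nat.sub_add_cancel (by omega : 2 ≤ R), hRR] using hval 2 (by omega) (R - 2)

end BlockEnds

theorem stmt_2_general (p q r : ℤ) (hp : p ≠ 0) (hgcd : Int.gcd p q = 1)
    (hq1 : 1 ≤ q) (hr2 : 2 ≤ r) (hre : Even r)
    (n m : ℕ) (hn : (n : ℤ) = q * r) (hm : (m : ℤ) = |p| * r)
    (hex : ∃ x : Fin n → ℤ, (twist n)^[m] x = x ∧ 2 ≤ (colors n m x).encard) :
    ∃ x : Fin n → ℤ, (twist n)^[m] x = x ∧ colors n m x = {0, 1, 2, 3} := by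
  lift q to ℕ using by omega
  lift r to ℕ using by omega
  rw [← Int.natCast_natAbs] at hm
  have hn' : n = q * r := by exact_mod_cast hn
  have hm' : m = p.natAbs * r := by exact_mod_cast hm
  have hp' : 1 ≤ p.natAbs := Int.natAbs_pos.mpr hp
  have : NeZero n := ⟨by rw [hn']; exact Nat.mul_ne_zero (by omega) (by omega)⟩
  rw [Int.even_coe_nat] at hre
  obtain rfl | hr4 : r = 2 ∨ 4 ≤ r := by obtain ⟨k, hk⟩ := hre; omega
  · obtain ⟨x, hx, hcard⟩ := hex
    have hcop : Nat.gcd p.natAbs q = 1 := hgcd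
    have hmn : Nat.gcd m n = 2 := by rw [hm', hn', Nat.gcd_mul_right, hcop, one_mul]
    have hsub : colors n m x ⊆ {x 0} := colors_subset_singleton_of_forall_eq
      (apply_eq_apply_zero_of_iterate_twist (by omega) hmn hx)
    have := hcard.trans ((Set.encard_le_encard hsub).trans_eq (Set.encard_singleton _))
    norm_num at this
  · have hrn : r ∣ n := ⟨q, by rw [hn', mul_comm]⟩
    have hrm : r ∣ m := ⟨p.natAbs, by rw [hm', mul_comm]⟩
    exact ⟨_, iterate_twist_blockEnds_of_dvd hre hrn hrm,
      colors_blockEnds hre (by omega) hrn (by nlinarith)⟩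

theorem stmt_2 (p q r : ℤ) (hp : p ≠ 0) (hgcd : Int.gcd p q = 1)
    (hq1 : 1 ≤ q) (hqp : q ≤ |p|) (hr2 : 2 ≤ r) (hre : Even r)
    (n m : ℕ) (hn : (n : ℤ) = q * r) (hm : (m : ℤ) = |p| * r)
    (hex : ∃ x : Fin n → ℤ, (twist n)^[m] x = x ∧ 2 ≤ (colors n m x).encard) :
    ∃ x : Fin n → ℤ, (twist n)^[m] x = x ∧ colors n m x = {0, 1, 2, 3} :=
  stmt_2_general p q r hp hgcd hq1 hr2 hre n m hn hm hex
end

section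
/- Let p, q, r be integers with p ≠ 0, gcd(p, q) = 1, |p| ≥ q ≥ 1, r ≥ 2 and r even, and set n = qr, m = |p|·r. Then the set { x ∈ ℤ^n : T_n^m(x) = x and C(x) = {0,1,2,3} } equals { (a, a, …, a) ∈ ℤ^n (the concatenation of q copies of a) : a ∈ A01 ∪ A12 ∪ A23 } with the two constant vectors (1,1,…,1) and (2,2,…,2) removed. -/
/-- The `j`-th block (of length `R`) of a vector `x ∈ ℤ^{QR}`. -/
def blk (Q R : ℕ) (x : Fin (Q * R) → ℤ) (j : Fin Q) (i : Fin R) : ℤ :=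
  x ⟨(j : ℕ) * R + (i : ℕ), by
    calc (j : ℕ) * R + (i : ℕ) < (j : ℕ) * R + R := Nat.add_lt_add_left i.2 _
      _ = ((j : ℕ) + 1) * R := (Nat.succ_mul _ _).symm
      _ ≤ Q * R := Nat.mul_le_mul_right R j.2⟩

/-- `Δ(a) = a_1 − a_2 + a_3 − ⋯ + (−1)^{r+1} a_r` (0-indexed signs `(−1)^i`). -/
def delta (R : ℕ) (a : Fin R → ℤ) : ℤ := ∑ i : Fin R, (-1 : ℤ) ^ (i : ℕ) * a i


/-- `A01`: tuples in `{0,1}^r` with `a_1 = a_r = 1` and `a_{2i} = a_{2i+1}` for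
`i = 1,…,r/2−1` (1-indexed); 0-indexed: the pairs `(k, k+1)` with `k` odd agree. -/
def A01 (R : ℕ) : Set (Fin R → ℤ) :=
  {a | (∀ i, a i = 0 ∨ a i = 1) ∧
       (∀ i : Fin R, (i : ℕ) = 0 ∨ (i : ℕ) = R - 1 → a i = 1) ∧
       (∀ k : Fin R, (k : ℕ) % 2 = 1 → ∀ h : (k : ℕ) + 1 < R, a ⟨(k : ℕ) + 1, h⟩ = a k)}

/-- `A12`: tuples in `{1,2}^r` with `a_{2i−1} = a_{2i}` for `i = 1,…,r/2`
(1-indexed); 0-indexed: the pairs `(k, k+1)` with `k` even agree. -/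
def A12 (R : ℕ) : Set (Fin R → ℤ) :=
  {a | (∀ i, a i = 1 ∨ a i = 2) ∧
       (∀ k : Fin R, (k : ℕ) % 2 = 0 → ∀ h : (k : ℕ) + 1 < R, a ⟨(k : ℕ) + 1, h⟩ = a k)}

/-- `A23`: tuples in `{2,3}^r` with `a_1 = a_r = 2` and `a_{2i} = a_{2i+1}` for
`i = 1,…,r/2−1` (1-indexed); 0-indexed: the pairs `(k, k+1)` with `k` odd agree. -/
def A23 (R : ℕ) : Set (Fin R → ℤ) :=
  {a | (∀ i, a i = 2 ∨ a i = 3) ∧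
       (∀ i : Fin R, (i : ℕ) = 0 ∨ (i : ℕ) = R - 1 → a i = 2) ∧
       (∀ k : Fin R, (k : ℕ) % 2 = 1 → ∀ h : (k : ℕ) + 1 < R, a ⟨(k : ℕ) + 1, h⟩ = a k)}

open Function Fin.NatCast

theorem Function.Periodic.apply_eq_of_modEq {α : Type*} {s : ℕ → α} {R i j : ℕ}
    (hs : Periodic s R) (h : i ≡ j [MOD R]) : s i = s j := by
  rw [← hs.map_mod_nat i, ← hs.map_mod_nat j]
  exact congrArg s h

theorem Function.Periodic.of_coprime_mul {α : Type*} {s : ℕ → α} {P Q R : ℕ}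
    (hP : Periodic s (P * R)) (hQ : Periodic s (Q * R)) (hPQ : Nat.Coprime P Q) :
    Periodic s R := by
  rcases Nat.eq_zero_or_pos Q with rfl | hQ0
  · rw [Nat.coprime_zero_right] at hPQ
    simpa [hPQ] using hP
  obtain ⟨u, -, hu⟩ := Nat.exists_mul_mod_eq_of_coprime 1 hPQ hQ0.ne'
  have hmod : u * (P * R) ≡ R [MOD Q * R] := by
    simpa [mul_comm, mul_left_comm, mul_assoc] using Nat.ModEq.mul_right' R hu
  intro j
  rw [hQ.apply_eq_of_modEq (hmod.add_left j).symm]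
  simpa using hP.nat_mul u j

theorem Function.Periodic.forall_odd_add_succ_eq_iff {α : Type*} {s : ℕ → α} {R : ℕ}
    (hs : Periodic s R) (hR : Even R) (hR0 : 0 < R) (b : ℕ) :
    (∀ k, Odd (k + b) → s (k + 1) = s k) ↔ ∀ k < R, Odd (k + b) → s (k + 1) = s k := by
  refine ⟨fun h k _ => h k, fun h k hk => ?_⟩
  have hpar : Odd (k % R + b) := by
    have := Nat.mod_mod_of_dvd k (even_iff_two_dvd.mp hR)
    rw [Nat.odd_iff] at hk ⊢
    omega
  rw [hs.apply_eq_of_modEq ((Nat.mod_modEq k R).add_right 1).symm, h _ (Nat.mod_lt k hR0) hpar,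
    hs.map_mod_nat]

theorem forall_lt_odd_add_iff {R : ℕ} (hR : Even R) (hR0 : 0 < R) (b : ℕ) (p : ℕ → Prop) :
    (∀ k < R, Odd (k + b) → p k) ↔
      (∀ k, k + 1 < R → Odd (k + b) → p k) ∧ (Even b → p (R - 1)) := by
  have hRb : Odd (R - 1 + b) ↔ Even b := by
    obtain ⟨r, rfl⟩ := hR
    rw [Nat.odd_iff, Nat.even_iff]
    omega
  constructor
  · intro h
    exact ⟨fun k hk => h k (by omega), fun hb => h _ (by omega) (hRb.mpr hb)⟩
  · rintro ⟨h, hend⟩ k hk hodd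
    rcases Nat.lt_or_ge (k + 1) R with hk' | hk'
    · exact h k hk' hodd
    · obtain rfl : k = R - 1 := by omega
      exact hend (hRb.mp hodd)

theorem Set.range_eq_pair_of_subset {ι α : Type*} [Nonempty ι] {f : ι → α} {u v : α}
    (h : Set.range f ⊆ {u, v}) (hu : Set.range f ≠ {v}) (hv : Set.range f ≠ {u}) :
    Set.range f = {u, v} := by
  refine h.antisymm (Set.insert_subset_iff.mpr ⟨?_, Set.singleton_subset_iff.mpr ?_⟩) <;>
    by_contra hmem
  · refine hu ((Set.range_nonempty f).subset_singleton_iff.mp fun w hw => ?_)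
    rcases h hw with rfl | rfl
    exacts [absurd hw hmem, rfl]
  · refine hv ((Set.range_nonempty f).subset_singleton_iff.mp fun w hw => ?_)
    rcases h hw with rfl | rfl
    exacts [rfl, absurd hw hmem]

def periodicExt {n : ℕ} [NeZero n] (x : Fin n → ℤ) (j : ℕ) : ℤ := x j

section PeriodicExt

variable {n : ℕ} [NeZero n] (x : Fin n → ℤ)

theorem periodicExt_periodic : Periodic (periodicExt x) n := by
  intro j
  simp [periodicExt]

theorem periodicExt_val (i : Fin n) : periodicExt x i = x i := by
  simp [periodicExt]

theorem periodicExt_of_lt {j : ℕ} (h : j < n) : periodicExt x j = x ⟨j, h⟩ :=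
  periodicExt_val x ⟨j, h⟩

theorem periodicExt_injective : Injective (periodicExt : (Fin n → ℤ) → ℕ → ℤ) :=
  fun x y h => funext fun i => by rw [← periodicExt_val x, ← periodicExt_val y, h]

theorem range_periodicExt : Set.range (periodicExt x) = Set.range x := by
  ext v
  constructor
  · rintro ⟨j, rfl⟩
    exact ⟨_, rfl⟩
  · rintro ⟨i, rfl⟩
    exact ⟨i, periodicExt_val x i⟩

theorem periodicExt_sub_one_add_one : periodicExt x (n - 1 + 1) = periodicExt x 0 := by
  simp only [periodicExt, Nat.sub_add_cancel (NeZero.pos n), Fin.natCast_self, Nat.cast_zero]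

end PeriodicExt

theorem periodic_iff_eq_periodicExt {s : ℕ → ℤ} {R : ℕ} [NeZero R] :
    Periodic s R ↔ s = periodicExt (fun i : Fin R => s i) := by
  refine ⟨fun hs => funext fun j => ?_, fun h => h ▸ periodicExt_periodic _⟩
  simp [periodicExt, hs.map_mod_nat]

theorem forall_blk_eq_iff {Q R : ℕ} [NeZero R] [NeZero (Q * R)] (x : Fin (Q * R) → ℤ)
    (a : Fin R → ℤ) : (∀ j i, blk Q R x j i = a i) ↔ periodicExt x = periodicExt a := by
  have hx : ∀ (j : Fin Q) (i : Fin R), blk Q R x j i = periodicExt x (j * R + i) := fun j i =>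
    (periodicExt_of_lt x _).symm
  have ha : ∀ (j : ℕ) (i : Fin R), periodicExt a (j * R + i) = a i := fun j i => by
    rw [periodicExt, Nat.cast_add, Fin.cast_val_eq_self]
    congr 1
    ext
    simp [Fin.val_add, Nat.mod_eq_of_lt i.2]
  refine ⟨fun h => funext fun t => ?_, fun h j i => by rw [hx, h, ha]⟩
  have haQ : Periodic (periodicExt a) (Q * R) := by simpa using (periodicExt_periodic a).nat_mul Q
  have ht : t % (Q * R) = t % (Q * R) / R * R + t % (Q * R) % R := (Nat.div_add_mod' _ R).symm
  have hj : t % (Q * R) / R < Q :=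
    Nat.div_lt_of_lt_mul ((Nat.mod_lt t (NeZero.pos _)).trans_eq (mul_comm Q R))
  rw [← (periodicExt_periodic x).map_mod_nat, ← haQ.map_mod_nat, ht]
  exact (hx ⟨_, hj⟩ ⟨_, Nat.mod_lt _ (NeZero.pos R)⟩).symm.trans
    ((h _ _).trans (ha _ ⟨_, Nat.mod_lt _ (NeZero.pos R)⟩).symm)

def twistOffset (s : ℕ → ℤ) : ℕ → ℤ
  | 0 => 0
  | k + 1 => twistOffset s k + 2 * (-1) ^ k * s k

def colorSet (s : ℕ → ℤ) : Set ℤ := {c | ∃ k j, twistOffset s k + (-1) ^ k * s j = c}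

section TwistOffset

variable (s : ℕ → ℤ)

theorem twistOffset_one : twistOffset s 1 = 2 * s 0 := by
  simp [twistOffset]

theorem twistOffset_add_two (k : ℕ) :
    twistOffset s (k + 2) = twistOffset s k + 2 * (-1) ^ k * (s k - s (k + 1)) := by
  simp only [twistOffset, pow_succ]
  ring

theorem even_twistOffset (k : ℕ) : Even (twistOffset s k) := by
  induction k with
  | zero => exact ⟨0, rfl⟩
  | succ k ih => exact ih.add ((even_two_mul _).mul_right _)

theorem mem_colorSet (k j : ℕ) : twistOffset s k + (-1) ^ k * s j ∈ colorSet s := ⟨k, j, rfl⟩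

variable {s} {P : ℕ}

theorem twistOffset_add_of_periodic (hs : Periodic s P) (hP : Even P) (k : ℕ) :
    twistOffset s (k + P) = twistOffset s k + twistOffset s P := by
  induction k with
  | zero => rw [zero_add, twistOffset, zero_add]
  | succ k ih =>
    rw [Nat.add_right_comm, twistOffset, twistOffset, ih, hs, pow_add, hP.neg_one_pow, mul_one]
    ring

theorem twistOffset_nat_mul_of_periodic (hs : Periodic s P) (hP : Even P) (t : ℕ) :
    twistOffset s (t * P) = t * twistOffset s P := by
  induction t with
  | zero => simp [twistOffset]
  | succ t ih =>
    rw [Nat.succ_mul, twistOffset_add_of_periodic hs hP, ih]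
    push_cast
    ring

theorem periodic_twistOffset (hs : Periodic s P) (hP : Even P) (h : twistOffset s P = 0) :
    Periodic (twistOffset s) P := fun k => by
  rw [twistOffset_add_of_periodic hs hP, h, add_zero]

end TwistOffset

section Twist

variable {n : ℕ} [NeZero n] (x : Fin n → ℤ) {m : ℕ}

theorem twist_iterate_apply (k : ℕ) (i : Fin n) :
    (twist n)^[k] x i = twistOffset (periodicExt x) k + (-1) ^ k * periodicExt x (i + k) := by
  induction k generalizing i with
  | zero => simp [twistOffset, periodicExt_val]
  | succ k ih =>
    rw [iterate_succ_apply', twist]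
    split_ifs with h
    · rw [ih, ih, twistOffset, pow_succ, zero_add, show i.val + 1 + k = i.val + (k + 1) by omega]
      ring
    · rw [ih, twistOffset, show i.val + (k + 1) = k + n by omega, periodicExt_periodic, pow_succ,
        zero_add]
      ring

theorem colors_eq_setOf (m : ℕ) : colors n m x =
    {c | ∃ k < m, ∃ j, twistOffset (periodicExt x) k + (-1) ^ k * periodicExt x j = c} := by
  ext c
  constructor
  · rintro ⟨k, hk, i, rfl⟩
    exact ⟨k, hk, i + k, (twist_iterate_apply x k i).symm⟩
  · rintro ⟨k, hk, j, rfl⟩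
    refine ⟨k, hk, (j : Fin n) - k, ?_⟩
    rw [twist_iterate_apply]
    simp [periodicExt]

theorem twist_iterate_eq_self_iff (hm : Even m) :
    (twist n)^[m] x = x ↔ twistOffset (periodicExt x) m = 0 ∧ Periodic (periodicExt x) m := by
  constructor
  · intro h
    set s := periodicExt x
    have hshift : ∀ j, s (j + m) = s j - twistOffset s m := fun j => by
      have := congrFun h j
      rw [twist_iterate_apply, hm.neg_one_pow, one_mul] at this
      simp only [s, periodicExt, Nat.cast_add, Fin.cast_val_eq_self] at this ⊢
      linarith
    have hiter : ∀ t j, s (j + t * m) = s j - t * twistOffset s m := by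
      intro t
      induction t with
      | zero => simp
      | succ t ih =>
        intro j
        rw [Nat.succ_mul, ← add_assoc, hshift, ih]
        push_cast
        ring
    have hzero : twistOffset s m = 0 := by
      have hback : s (0 + n * m) = s 0 := by
        simpa [mul_comm] using (periodicExt_periodic x).nat_mul m 0
      have hn : (n : ℤ) * twistOffset s m = 0 := by linarith [hiter n 0]
      simpa [NeZero.ne n] using hn
    exact ⟨hzero, fun j => by rw [hshift, hzero, sub_zero]⟩
  · rintro ⟨h0, hper⟩
    funext i
    rw [twist_iterate_apply, h0, hm.neg_one_pow, one_mul, zero_add, hper, periodicExt_val]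

theorem colors_eq_colorSet (hm : Even m) (hm0 : 0 < m)
    (hc : Periodic (twistOffset (periodicExt x)) m) : colors n m x = colorSet (periodicExt x) := by
  rw [colors_eq_setOf]
  ext c
  constructor
  · rintro ⟨k, -, j, rfl⟩
    exact ⟨k, j, rfl⟩
  · rintro ⟨k, j, rfl⟩
    refine ⟨k % m, Nat.mod_lt k hm0, j, ?_⟩
    rw [hc.map_mod_nat, neg_one_pow_eq_pow_mod_two, Nat.mod_mod_of_dvd k (even_iff_two_dvd.mp hm),
      ← neg_one_pow_eq_pow_mod_two]

end Twist

/-- For `k` of parity opposite to `b`, `c_k` is the unique even integer with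
`c_k + (-1)^k b` and `c_k + (-1)^k (b+1)` both in `[0, 3]`. -/
def OffsetPinned (s : ℕ → ℤ) (b : ℕ) : Prop :=
  ∀ k, Odd (k + b) → 2 * twistOffset s k + (-1) ^ k * (2 * b + 1) = 3

section OffsetPinned

variable {s : ℕ → ℤ} {b R : ℕ}

theorem OffsetPinned.succ_eq (h : OffsetPinned s b) {k : ℕ} (hk : Odd (k + b)) :
    s (k + 1) = s k := by
  have h2 := h (k + 2) (by rw [Nat.add_right_comm]; exact hk.add_even even_two)
  have h0 := h k hk
  rw [twistOffset_add_two, pow_add, neg_one_sq, mul_one] at h2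
  rcases neg_one_pow_eq_or ℤ k with hε | hε <;> rw [hε] at h0 h2 <;> linarith

theorem OffsetPinned.two_mul_apply_zero (h : OffsetPinned s b) (hb : Even b) :
    2 * s 0 = b + 2 := by
  have h1 := h 1 (by rw [add_comm]; exact hb.add_one)
  rw [twistOffset_one] at h1
  linarith

theorem offsetPinned_of_succ_eq (hb : b ≤ 2) (hpair : ∀ k, Odd (k + b) → s (k + 1) = s k)
    (hstart : Even b → 2 * s 0 = b + 2) : OffsetPinned s b := by
  intro k
  induction k using Nat.twoStepInduction with
  | zero =>
    intro hk
    obtain rfl : b = 1 := by rw [Nat.odd_iff] at hk; omega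
    simp [twistOffset]
  | one =>
    intro hk
    have := hstart (by rw [Nat.odd_iff] at hk; rw [Nat.even_iff]; omega)
    rw [twistOffset_one]
    linarith
  | more k ih _ =>
    intro hk
    have hk' : Odd (k + b) := by rw [Nat.odd_iff] at hk ⊢; omega
    rw [twistOffset_add_two, hpair k hk', pow_add, neg_one_sq, mul_one, sub_self, mul_zero,
      add_zero]
    exact ih hk'

theorem offsetPinned_iff (hb : b ≤ 2) :
    OffsetPinned s b ↔ (∀ k, Odd (k + b) → s (k + 1) = s k) ∧ (Even b → 2 * s 0 = b + 2) :=
  ⟨fun h => ⟨fun _ hk => h.succ_eq hk, h.two_mul_apply_zero⟩,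
    fun h => offsetPinned_of_succ_eq hb h.1 h.2⟩

theorem OffsetPinned.twistOffset_eq_zero (h : OffsetPinned s b) (hs : Periodic s R)
    (hR : Even R) : twistOffset s R = 0 := by
  have hk : Odd (b + 1 + b) := by rw [Nat.odd_iff]; omega
  have hkR := h (b + 1 + R) (by rw [Nat.add_right_comm]; exact hk.add_even hR)
  rw [twistOffset_add_of_periodic hs hR, pow_add, hR.neg_one_pow, mul_one] at hkR
  linarith [h _ hk]

theorem OffsetPinned.exists_odd_add_apply_eq (h : OffsetPinned s b) (hs : Periodic s R)
    (hR : 0 < R) (j : ℕ) : ∃ k, Odd (k + b) ∧ s k = s j := by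
  by_cases hj : Odd (j + R + b)
  · exact ⟨j + R, hj, hs j⟩
  · have hj' : Odd (j + R - 1 + b) := by
      rw [Nat.not_odd_iff_even, Nat.even_iff] at hj
      rw [Nat.odd_iff]
      omega
    refine ⟨j + R - 1, hj', ?_⟩
    rw [← h.succ_eq hj', Nat.sub_add_cancel (by omega), hs]

theorem OffsetPinned.colorSet_subset (h : OffsetPinned s b) (hb : b ≤ 2)
    (hr : Set.range s ⊆ {(b : ℤ), (b : ℤ) + 1}) : colorSet s ⊆ Set.Icc 0 3 := by
  have hval : ∀ j, s j = b ∨ s j = b + 1 := fun j => hr ⟨j, rfl⟩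
  rintro _ ⟨k, j, rfl⟩
  have hj := hval j
  rw [Set.mem_Icc]
  rcases k with _ | k
  · simp only [twistOffset, pow_zero, one_mul, zero_add]
    omega
  by_cases hk : Odd (k + 1 + b)
  · have e := h _ hk
    rcases neg_one_pow_eq_or ℤ (k + 1) with hε | hε <;> rw [hε] at e ⊢ <;> omega
  · have hk' : Odd (k + b) := by
      rw [Nat.not_odd_iff_even, Nat.even_iff] at hk
      rw [Nat.odd_iff]
      omega
    have e := h _ hk'
    have hk := hval k
    rw [twistOffset, pow_succ]
    rcases neg_one_pow_eq_or ℤ k with hε | hε <;> rw [hε] at e ⊢ <;> omega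

theorem OffsetPinned.Icc_subset_colorSet (h : OffsetPinned s b) (hs : Periodic s R) (hR : 0 < R)
    (hr : {(b : ℤ), (b : ℤ) + 1} ⊆ Set.range s) : Set.Icc 0 3 ⊆ colorSet s := by
  obtain ⟨j₀, hj₀⟩ := hr (Set.mem_insert _ _)
  obtain ⟨j₁, hj₁⟩ := hr (Set.mem_insert_of_mem _ rfl)
  obtain ⟨k₀, hk₀, hs₀⟩ := h.exists_odd_add_apply_eq hs hR j₀
  obtain ⟨k₁, hk₁, hs₁⟩ := h.exists_odd_add_apply_eq hs hR j₁
  have e₀ := h k₀ hk₀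
  have e₁ := h k₁ hk₁
  have hsign : (-1 : ℤ) ^ k₁ = (-1) ^ k₀ := by
    rw [neg_one_pow_eq_pow_mod_two, neg_one_pow_eq_pow_mod_two (n := k₀)]
    rw [Nat.odd_iff] at hk₀ hk₁
    congr 1
    omega
  rintro v ⟨hv₀, hv₃⟩
  -- the pinned index `k₀` gives the colours 1 and 2, the successors of `k₀` and `k₁` give 0 and 3
  have : v = twistOffset s k₀ + (-1) ^ k₀ * s j₀ ∨ v = twistOffset s k₀ + (-1) ^ k₀ * s j₁ ∨
      v = twistOffset s (k₀ + 1) + (-1) ^ (k₀ + 1) * s j₁ ∨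
      v = twistOffset s (k₁ + 1) + (-1) ^ (k₁ + 1) * s j₀ := by
    rw [twistOffset, twistOffset, pow_succ, pow_succ, hsign]
    rw [hsign] at e₁
    rcases neg_one_pow_eq_or ℤ k₀ with hε | hε <;> rw [hε] at e₀ e₁ ⊢ <;> omega
  rcases this with rfl | rfl | rfl | rfl <;> exact mem_colorSet s _ _

end OffsetPinned

section ColorSetEqIcc

variable {s : ℕ → ℤ} {b : ℕ}

theorem apply_mem_Icc_of_colorSet_subset (h : colorSet s ⊆ Set.Icc 0 3) (j : ℕ) :
    s j ∈ Set.Icc 0 3 := by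
  simpa [twistOffset] using h (mem_colorSet s 0 j)

theorem apply_le_add_two_of_colorSet_subset (h : colorSet s ⊆ Set.Icc 0 3) (i j : ℕ) :
    s j ≤ s i + 2 := by
  have hi := h (mem_colorSet s 1 i)
  have hj := h (mem_colorSet s 1 j)
  have := apply_mem_Icc_of_colorSet_subset h i
  have := apply_mem_Icc_of_colorSet_subset h j
  simp only [twistOffset_one, pow_one, Set.mem_Icc] at *
  omega

theorem apply_le_add_one_of_colorSet_eq (h : colorSet s = Set.Icc 0 3) (i j : ℕ) :
    s j ≤ s i + 1 := by
  by_contra! hlt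
  have hsi := apply_mem_Icc_of_colorSet_subset h.le i
  have hsj := apply_mem_Icc_of_colorSet_subset h.le j
  have hij := apply_le_add_two_of_colorSet_subset h.le i j
  rw [Set.mem_Icc] at hsi hsj
  -- with `s j = s i + 2`, parity forces `c_k = 0` for even `k` and `c_k = 2 s i + 2` for odd `k`,
  -- so the colour `3 - 3 s i` needs an entry at distance 3 from `s i` or `s j`
  obtain ⟨k, l, hkl⟩ : 3 - 3 * s i ∈ colorSet s := by
    rw [h]
    constructor <;> omega
  obtain ⟨t, ht⟩ := even_twistOffset s k
  have hi := h.le (mem_colorSet s k i)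
  have hj := h.le (mem_colorSet s k j)
  have := apply_mem_Icc_of_colorSet_subset h.le l
  have := apply_le_add_two_of_colorSet_subset h.le i l
  have := apply_le_add_two_of_colorSet_subset h.le l j
  simp only [Set.mem_Icc] at *
  rcases neg_one_pow_eq_or ℤ k with hε | hε <;> rw [hε] at hi hj hkl <;> omega

theorem exists_range_eq_pair_of_colorSet_eq (h : colorSet s = Set.Icc 0 3) :
    ∃ b : ℕ, b ≤ 2 ∧ Set.range s = {(b : ℤ), (b : ℤ) + 1} := by
  have hclose := apply_le_add_one_of_colorSet_eq h
  -- a colour has the parity of the entry it comes from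
  obtain ⟨lo, hi, hlohi⟩ : ∃ lo hi, s hi = s lo + 1 := by
    obtain ⟨k₀, l₀, h₀⟩ : (0 : ℤ) ∈ colorSet s := by rw [h]; norm_num
    obtain ⟨k₁, l₁, h₁⟩ : (1 : ℤ) ∈ colorSet s := by rw [h]; norm_num
    obtain ⟨t₀, ht₀⟩ := even_twistOffset s k₀
    obtain ⟨t₁, ht₁⟩ := even_twistOffset s k₁
    have := hclose l₀ l₁
    have := hclose l₁ l₀
    have hdiff : s l₁ = s l₀ + 1 ∨ s l₀ = s l₁ + 1 := by
      rcases neg_one_pow_eq_or ℤ k₀ with hε₀ | hε₀ <;>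
        rcases neg_one_pow_eq_or ℤ k₁ with hε₁ | hε₁ <;>
        rw [hε₀] at h₀ <;> rw [hε₁] at h₁ <;> omega
    rcases hdiff with hd | hd
    exacts [⟨l₀, l₁, hd⟩, ⟨l₁, l₀, hd⟩]
  have hlo := apply_mem_Icc_of_colorSet_subset h.le lo
  have hhi := apply_mem_Icc_of_colorSet_subset h.le hi
  rw [Set.mem_Icc] at hlo hhi
  refine ⟨(s lo).toNat, by omega, Set.ext fun v => ⟨?_, ?_⟩⟩
  · rintro ⟨j, rfl⟩
    have := hclose j lo
    have := hclose lo j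
    have := hclose j hi
    simp only [Set.mem_insert_iff, Set.mem_singleton_iff]
    omega
  · rintro (rfl | rfl)
    exacts [⟨lo, by omega⟩, ⟨hi, by omega⟩]

theorem offsetPinned_of_colorSet_subset (h : colorSet s ⊆ Set.Icc 0 3)
    (hr : Set.range s = {(b : ℤ), (b : ℤ) + 1}) : OffsetPinned s b := by
  intro k hk
  obtain ⟨i, hi⟩ : (b : ℤ) ∈ Set.range s := by simp [hr]
  obtain ⟨j, hj⟩ : (b : ℤ) + 1 ∈ Set.range s := by simp [hr]
  have := h (mem_colorSet s k i)
  have := h (mem_colorSet s k j)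
  obtain ⟨t, ht⟩ := even_twistOffset s k
  simp only [Set.mem_Icc] at *
  rcases Nat.even_or_odd k with hk' | hk'
  · have : b % 2 = 1 := by rw [Nat.odd_iff] at hk; rw [Nat.even_iff] at hk'; omega
    rw [hk'.neg_one_pow] at *
    omega
  · have : b % 2 = 0 := by rw [Nat.odd_iff] at hk hk'; omega
    rw [hk'.neg_one_pow] at *
    omega

theorem colorSet_eq_Icc_iff {R : ℕ} (hs : Periodic s R) (hR : 0 < R) :
    colorSet s = Set.Icc 0 3 ↔
      ∃ b : ℕ, b ≤ 2 ∧ Set.range s = {(b : ℤ), (b : ℤ) + 1} ∧ OffsetPinned s b := by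
  constructor
  · intro h
    obtain ⟨b, hb, hr⟩ := exists_range_eq_pair_of_colorSet_eq h
    exact ⟨b, hb, hr, offsetPinned_of_colorSet_subset h.le hr⟩
  · rintro ⟨b, hb, hr, h⟩
    exact (h.colorSet_subset hb hr.le).antisymm (h.Icc_subset_colorSet hs hR hr.ge)

end ColorSetEqIcc

section Blocks

variable {R : ℕ} [NeZero R] (a : Fin R → ℤ)

theorem forall_block_succ_eq_iff (p : ℕ → Prop) :
    (∀ k : Fin R, p k → ∀ h : (k : ℕ) + 1 < R, a ⟨k + 1, h⟩ = a k) ↔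
      ∀ k, k + 1 < R → p k → periodicExt a (k + 1) = periodicExt a k := by
  constructor
  · intro h k hk hp
    rw [periodicExt_of_lt a hk, periodicExt_of_lt a (by omega)]
    exact h ⟨k, by omega⟩ hp hk
  · intro h k hp hk
    rw [← periodicExt_of_lt a hk, ← periodicExt_val a k]
    exact h k hk hp

theorem forall_ends_eq_iff (c : ℤ) :
    (∀ i : Fin R, (i : ℕ) = 0 ∨ (i : ℕ) = R - 1 → a i = c) ↔
      periodicExt a 0 = c ∧ periodicExt a (R - 1) = c := by
  have hR0 := NeZero.pos R
  rw [periodicExt_of_lt a hR0, periodicExt_of_lt a (by omega)]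
  constructor
  · intro h
    exact ⟨h _ (Or.inl rfl), h _ (Or.inr rfl)⟩
  · rintro ⟨h0, h1⟩ i (hi | hi)
    · rwa [show i = ⟨0, hR0⟩ from Fin.ext hi]
    · rwa [show i = ⟨R - 1, by omega⟩ from Fin.ext hi]

theorem block_odd_pairs_iff (hR : Even R) {b : ℕ} (hb : b ≤ 2) (hbe : Even b) {c : ℤ}
    (hc : 2 * c = b + 2) :
    ((∀ i, a i = b ∨ a i = b + 1) ∧ (∀ i : Fin R, (i : ℕ) = 0 ∨ (i : ℕ) = R - 1 → a i = c) ∧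
      (∀ k : Fin R, (k : ℕ) % 2 = 1 → ∀ h : (k : ℕ) + 1 < R, a ⟨(k : ℕ) + 1, h⟩ = a k)) ↔
      Set.range a ⊆ {(b : ℤ), (b : ℤ) + 1} ∧ OffsetPinned (periodicExt a) b := by
  have hodd : ∀ k, Odd (k + b) ↔ k % 2 = 1 := fun k => by
    obtain ⟨r, rfl⟩ := hbe
    rw [Nat.odd_iff]
    omega
  rw [offsetPinned_iff hb,
    (periodicExt_periodic a).forall_odd_add_succ_eq_iff hR (NeZero.pos R),
    forall_lt_odd_add_iff hR (NeZero.pos R), forall_ends_eq_iff,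
    forall_block_succ_eq_iff a (· % 2 = 1), periodicExt_sub_one_add_one, Set.range_subset_iff]
  simp only [hodd, hbe, true_implies, Set.mem_insert_iff, Set.mem_singleton_iff]
  constructor
  · rintro ⟨hv, ⟨h0, h1⟩, hpair⟩
    exact ⟨hv, ⟨hpair, by rw [h0, h1]⟩, by rw [h0, hc]⟩
  · rintro ⟨hv, ⟨hpair, hend⟩, h0⟩
    exact ⟨hv, ⟨by linarith, by linarith⟩, hpair⟩

theorem mem_A01_iff (hR : Even R) :
    a ∈ A01 R ↔ Set.range a ⊆ {0, 1} ∧ OffsetPinned (periodicExt a) 0 :=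
  block_odd_pairs_iff a hR (b := 0) (c := 1) (by norm_num) ⟨0, rfl⟩ (by norm_num)

theorem mem_A12_iff (hR : Even R) :
    a ∈ A12 R ↔ Set.range a ⊆ {1, 2} ∧ OffsetPinned (periodicExt a) 1 := by
  rw [offsetPinned_iff (by norm_num),
    (periodicExt_periodic a).forall_odd_add_succ_eq_iff hR (NeZero.pos R),
    forall_lt_odd_add_iff hR (NeZero.pos R)]
  simp only [A12, Set.mem_ofPred_eq, Set.range_subset_iff, Set.mem_insert_iff,
    Set.mem_singleton_iff, forall_block_succ_eq_iff a (· % 2 = 0), Nat.odd_add_one,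
    Nat.not_odd_iff_even, Nat.even_iff]
  simp

theorem mem_A23_iff (hR : Even R) :
    a ∈ A23 R ↔ Set.range a ⊆ {2, 3} ∧ OffsetPinned (periodicExt a) 2 :=
  block_odd_pairs_iff a hR (b := 2) (c := 2) (by norm_num) even_two (by norm_num)

theorem colorSet_periodicExt_eq_Icc_iff (hR : Even R) :
    colorSet (periodicExt a) = Set.Icc 0 3 ↔
      a ∈ A01 R ∪ A12 R ∪ A23 R ∧ a ≠ (fun _ => 1) ∧ a ≠ (fun _ => 2) := by
  have hconst : ∀ c : ℤ, a = (fun _ => c) ↔ Set.range a = {c} := fun c =>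
    ⟨by rintro rfl; exact Set.range_const,
      fun h => funext fun i => by simpa [h] using Set.mem_range_self (f := a) i⟩
  have hstart : ∀ {b : ℕ}, OffsetPinned (periodicExt a) b → Even b → 2 * a 0 = b + 2 :=
    fun h hb => by simpa [periodicExt] using h.two_mul_apply_zero hb
  rw [colorSet_eq_Icc_iff (periodicExt_periodic a) (NeZero.pos R), range_periodicExt,
    Set.mem_union, Set.mem_union, mem_A01_iff a hR, mem_A12_iff a hR, mem_A23_iff a hR, Ne, Ne,
    hconst, hconst]
  constructor
  · rintro ⟨b, hb, hS, h⟩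
    have hb₀ : (b : ℤ) ∈ Set.range a := hS ▸ Set.mem_insert _ _
    have hb₁ : (b : ℤ) + 1 ∈ Set.range a := hS ▸ Set.mem_insert_of_mem _ rfl
    refine ⟨?_, fun hc => ?_, fun hc => ?_⟩
    · interval_cases b
      · exact Or.inl (Or.inl ⟨by simp [hS], h⟩)
      · exact Or.inl (Or.inr ⟨by simp [hS], h⟩)
      · exact Or.inr ⟨by simp [hS], h⟩
    all_goals
      simp only [hc, Set.mem_singleton_iff] at hb₀ hb₁
      omega
  · have hne : ∀ {c d : ℤ}, c ∈ Set.range a → c ≠ d → Set.range a ≠ {d} := fun hc hcd hd =>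
      hcd (by simpa [hd] using hc)
    rintro ⟨((⟨hsub, h⟩ | ⟨hsub, h⟩) | ⟨hsub, h⟩), h1, h2⟩
    · refine ⟨0, by norm_num,
        Set.range_eq_pair_of_subset (by simpa using hsub) (by simpa using h1) ?_, h⟩
      exact hne (c := 1) ⟨0, by have := hstart h ⟨0, rfl⟩; omega⟩ (by norm_num)
    · exact ⟨1, by norm_num, Set.range_eq_pair_of_subset (by simpa using hsub)
        (by simpa [one_add_one_eq_two] using h2) h1, h⟩
    · refine ⟨2, le_rfl, Set.range_eq_pair_of_subset (by simpa using hsub) ?_ h2, h⟩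
      exact hne (c := 2) ⟨0, by have := hstart h even_two; omega⟩ (by norm_num)

end Blocks

theorem twist_iterate_eq_self_and_colors_iff {P Q R : ℕ} [NeZero (Q * R)] (x : Fin (Q * R) → ℤ)
    (hPQ : Nat.Coprime P Q) (hP : 0 < P) (hR : Even R) (hR0 : 0 < R) :
    (twist (Q * R))^[P * R] x = x ∧ colors (Q * R) (P * R) x = {0, 1, 2, 3} ↔
      Periodic (periodicExt x) R ∧ colorSet (periodicExt x) = Set.Icc 0 3 := by
  have hI : ({0, 1, 2, 3} : Set ℤ) = Set.Icc 0 3 := by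
    ext v
    simp only [Set.mem_insert_iff, Set.mem_singleton_iff, Set.mem_Icc]
    omega
  have hm : Even (P * R) := hR.mul_left P
  have hm0 : 0 < P * R := Nat.mul_pos hP hR0
  rw [twist_iterate_eq_self_iff x hm, hI]
  constructor
  · rintro ⟨⟨h0, hperm⟩, hcol⟩
    have hper : Periodic (periodicExt x) R := hperm.of_coprime_mul (periodicExt_periodic x) hPQ
    have hcR : twistOffset (periodicExt x) R = 0 := by
      have := twistOffset_nat_mul_of_periodic hper hR P
      rw [h0, eq_comm, mul_eq_zero] at this
      exact this.resolve_left (by exact_mod_cast hP.ne')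
    have hcper := (periodic_twistOffset hper hR hcR).nat_mul P
    rw [colors_eq_colorSet x hm hm0 (by simpa using hcper)] at hcol
    exact ⟨hper, hcol⟩
  · rintro ⟨hper, hcol⟩
    obtain ⟨b, -, -, hpin⟩ := (colorSet_eq_Icc_iff hper hR0).mp hcol
    have hcper := (periodic_twistOffset hper hR (hpin.twistOffset_eq_zero hper hR)).nat_mul P
    refine ⟨⟨by simpa [twistOffset] using hcper 0, by simpa using hper.nat_mul P⟩, ?_⟩
    rw [colors_eq_colorSet x hm hm0 (by simpa using hcper)]
    exact hcol

theorem periodic_and_colorSet_eq_Icc_iff {n R : ℕ} [NeZero n] [NeZero R] (hR : Even R)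
    (x : Fin n → ℤ) :
    Periodic (periodicExt x) R ∧ colorSet (periodicExt x) = Set.Icc 0 3 ↔
      (∃ a ∈ A01 R ∪ A12 R ∪ A23 R, periodicExt x = periodicExt a) ∧
        x ∉ ({fun _ => 1, fun _ => 2} : Set (Fin n → ℤ)) := by
  rw [periodic_iff_eq_periodicExt, Set.mem_insert_iff, Set.mem_singleton_iff]
  constructor
  · rintro ⟨hxy, hcol⟩
    rw [hxy, colorSet_periodicExt_eq_Icc_iff _ hR] at hcol
    obtain ⟨hU, h1, h2⟩ := hcol
    refine ⟨⟨_, hU, hxy⟩, ?_⟩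
    rintro (rfl | rfl)
    exacts [h1 rfl, h2 rfl]
  · rintro ⟨⟨a, hU, hxa⟩, hne⟩
    have hya : (fun i : Fin R => periodicExt x i) = a :=
      funext fun i => by rw [hxa, periodicExt_val]
    rw [hya, hxa, colorSet_periodicExt_eq_Icc_iff a hR]
    refine ⟨rfl, hU, ?_, ?_⟩ <;> rintro rfl <;> apply hne
    exacts [Or.inl (periodicExt_injective hxa), Or.inr (periodicExt_injective hxa)]

theorem stmt_8_general (p q r : ℤ) (hp : p ≠ 0) (hgcd : Int.gcd p q = 1)
    (hq1 : 1 ≤ q) (hr2 : 2 ≤ r) (hre : Even r)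
    (Q R m : ℕ) (hQ : (Q : ℤ) = q) (hR : (R : ℤ) = r) (hm : (m : ℤ) = |p| * r) :
    {x : Fin (Q * R) → ℤ | (twist (Q * R))^[m] x = x ∧ colors (Q * R) m x = {0, 1, 2, 3}}
      = {x : Fin (Q * R) → ℤ |
            ∃ a ∈ A01 R ∪ A12 R ∪ A23 R, ∀ (j : Fin Q) (i : Fin R), blk Q R x j i = a i}
        \ {fun _ => 1, fun _ => 2} := by
  subst hQ hR
  obtain rfl : m = p.natAbs * R := by
    rw [Int.abs_eq_natAbs] at hm
    exact_mod_cast hm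
  have hR0 : 0 < R := by omega
  have : NeZero R := ⟨hR0.ne'⟩
  have : NeZero (Q * R) := ⟨Nat.mul_ne_zero (by omega) hR0.ne'⟩
  have hRe : Even R := by exact_mod_cast hre
  have hco : Nat.Coprime p.natAbs Q := by simpa [Int.gcd] using hgcd
  ext x
  rw [Set.mem_ofPred_eq, twist_iterate_eq_self_and_colors_iff x hco (Int.natAbs_pos.mpr hp) hRe hR0,
    periodic_and_colorSet_eq_Icc_iff hRe, Set.mem_sdiff, Set.mem_ofPred_eq]
  simp only [forall_blk_eq_iff]

theorem stmt_8 (p q r : ℤ) (hp : p ≠ 0) (hgcd : Int.gcd p q = 1)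
    (hq1 : 1 ≤ q) (hqp : q ≤ |p|) (hr2 : 2 ≤ r) (hre : Even r)
    (Q R m : ℕ) (hQ : (Q : ℤ) = q) (hR : (R : ℤ) = r) (hm : (m : ℤ) = |p| * r) :
    {x : Fin (Q * R) → ℤ | (twist (Q * R))^[m] x = x ∧ colors (Q * R) m x = {0, 1, 2, 3}}
      = {x : Fin (Q * R) → ℤ |
            ∃ a ∈ A01 R ∪ A12 R ∪ A23 R, ∀ (j : Fin Q) (i : Fin R), blk Q R x j i = a i}
        \ {fun _ => 1, fun _ => 2} :=
  stmt_8_general p q r hp hgcd hq1 hr2 hre Q R m hQ hR hm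
end

section
/- Let n ≥ 1 and let ∗_Q be the associated quandle operation of the rack (ℤ^n, ◁), i.e. x ∗_Q y = (x ◁̄ x) ◁ y where ◁̄ is the inverse operation of ◁. Then for all x, y ∈ ℤ^n and all 1 ≤ i ≤ n, (x ∗_Q y)_i = x_i + 2(−x_n + x_{n−1} − x_{n−2} + ⋯ + (−1)^n x_1) + 2((−1)^{n+1} y_1 + (−1)^{n+2} y_2 + ⋯ + y_n); that is, (x ∗_Q y)_i = x_i + 2·Σ_{j=1}^n (−1)^{n−j+1} x_j + 2·Σ_{j=1}^n (−1)^{n−j} y_j. -/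
/-- The rack operation `◁` on `ℤ^n`:
`(x ◁ y)_i = (((x_i ∗ y_1) ∗ y_2) ⋯) ∗ y_n`, where `a ∗ b = 2b − a`. -/
def tri (n : ℕ) (x y : Fin n → ℤ) : Fin n → ℤ :=
  fun i => (List.ofFn y).foldl (fun a b => 2 * b - a) (x i)

/-- The associated quandle operation `x ∗_Q y = (x ∗̄ x) ∗ y` of a rack `(R, ∗)`
with inverse operation `∗̄` (`inv`). -/
def quandleOp {R : Type*} (op inv : R → R → R) : R → R → R :=
  fun x y => op (inv x x) y

/-
Each coordinate of `x ◁ y` is an iterated reflection `a ↦ 2b - a`, so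
`(x ◁ y)_i = (-1)^n x_i + 2 A(y)` with `A(y) = Σ_j (-1)^(n-j-1) y_j` independent of `i`.
Writing `w = x ◁̄ x`, the equation `w ◁ x = x` gives `(-1)^n w_i = x_i - 2 A(x)`, hence
`(w ◁ y)_i = x_i - 2 A(x) + 2 A(y)`.
-/

/-- With `0`-based `j`, this is the paper's `Σ_{j=1}^n (-1)^(n-j) y_j`. -/
def altSum {R : Type*} [CommRing R] {n : ℕ} (y : Fin n → R) : R :=
  ∑ j : Fin n, (-1) ^ (n - (j : ℕ) - 1) * y j

theorem foldl_reflect_ofFn {R : Type*} [CommRing R] {n : ℕ} (y : Fin n → R) (a : R) :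
    (List.ofFn y).foldl (fun a b => 2 * b - a) a = (-1) ^ n * a + 2 * altSum y := by
  induction n generalizing a with
  | zero => simp [altSum]
  | succ n ih =>
    rw [List.ofFn_succ, List.foldl_cons, ih, altSum, altSum, Fin.sum_univ_succ]
    simp only [Fin.val_zero, Fin.val_succ, Nat.add_sub_add_right, Nat.add_sub_cancel,
      Nat.sub_zero]
    ring

theorem tri_apply (n : ℕ) (x y : Fin n → ℤ) (i : Fin n) :
    tri n x y i = (-1) ^ n * x i + 2 * altSum y :=
  foldl_reflect_ofFn y (x i)

theorem sum_neg_one_pow_sub_mul_eq_neg_altSum {R : Type*} [CommRing R] {n : ℕ}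
    (x : Fin n → R) : ∑ j : Fin n, (-1 : R) ^ (n - (j : ℕ)) * x j = -altSum x := by
  rw [altSum, ← Finset.sum_neg_distrib]
  refine Finset.sum_congr rfl fun j _ => ?_
  rw [← neg_mul, ← neg_one_mul ((-1 : R) ^ _), ← pow_succ', Nat.sub_add_cancel (by omega)]

theorem stmt_14_general (n : ℕ)
    (inv : (Fin n → ℤ) → (Fin n → ℤ) → (Fin n → ℤ))
    (hinv₂ : ∀ x y, tri n (inv x y) y = x) :
    ∀ (x y : Fin n → ℤ) (i : Fin n),
      quandleOp (tri n) inv x y i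
        = x i + 2 * (∑ j : Fin n, (-1 : ℤ) ^ (n - (j : ℕ)) * x j)
            + 2 * (∑ j : Fin n, (-1 : ℤ) ^ (n - (j : ℕ) - 1) * y j) := by
  intro x y i
  have hfix : (-1) ^ n * inv x x i + 2 * altSum x = x i := by
    rw [← tri_apply, hinv₂]
  rw [quandleOp, tri_apply, sum_neg_one_pow_sub_mul_eq_neg_altSum, ← altSum]
  linear_combination hfix

theorem stmt_14 (n : ℕ) (hn : 1 ≤ n)
    (inv : (Fin n → ℤ) → (Fin n → ℤ) → (Fin n → ℤ))
    (hinv₁ : ∀ x y, inv (tri n x y) y = x) (hinv₂ : ∀ x y, tri n (inv x y) y = x) :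
    ∀ (x y : Fin n → ℤ) (i : Fin n),
      quandleOp (tri n) inv x y i
        = x i + 2 * (∑ j : Fin n, (-1 : ℤ) ^ (n - (j : ℕ)) * x j)
            + 2 * (∑ j : Fin n, (-1 : ℤ) ^ (n - (j : ℕ) - 1) * y j) :=
  stmt_14_general n inv hinv₂
end
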